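/- For every θ ≠ 0, the Frank Copula C_F is 2-increasing: for all 0 ≤ u₁ ≤ u₂ ≤ 1 and 0 ≤ v₁ ≤ v₂ ≤ 1, one has C_F(u₂, v₂) - C_F(u₂, v₁) - C_F(u₁, v₂) + C_F(u₁, v₁) ≥ 0. Together with its boundary conditions this shows C_F is a genuine copula, i.e., the CDF of a probability measure on [0,1]² with uniform marginals. -/
import Mathlib

set_option maxHeartbeats 1000000


open Real

/-- The inner argument of the logarithm in the Frank copula is positive. -/
lemma frank_inner_pos (θ u v : ℝ) (hθ : θ ≠ 0) (hu0 : 0 ≤ u) (hu1 : u ≤ 1)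
    (hv0 : 0 ≤ v) (hv1 : v ≤ 1) :
    0 < 1 + (Real.exp (-θ * u) - 1) * (Real.exp (-θ * v) - 1) / (Real.exp (-θ) - 1) := by
  rcases hθ.lt_or_gt with h | h
  · -- θ < 0 : D > 0 and the numerator is nonnegative
    have hD : 0 < Real.exp (-θ) - 1 := by
      have : (1:ℝ) < Real.exp (-θ) := Real.one_lt_exp_iff.mpr (by linarith)
      linarith
    have hx : 0 ≤ Real.exp (-θ * u) - 1 := by
      have : (1:ℝ) ≤ Real.exp (-θ * u) := Real.one_le_exp (by nlinarith)
      linarith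
    have hy : 0 ≤ Real.exp (-θ * v) - 1 := by
      have : (1:ℝ) ≤ Real.exp (-θ * v) := Real.one_le_exp (by nlinarith)
      linarith
    have := div_nonneg (mul_nonneg hx hy) hD.le
    linarith
  · -- θ > 0 : D < 0, and x, y lie in [D, 0]
    have hD : Real.exp (-θ) - 1 < 0 := by
      have : Real.exp (-θ) < 1 := Real.exp_lt_one_iff.mpr (by linarith)
      linarith
    have hxu : Real.exp (-θ) - 1 ≤ Real.exp (-θ * u) - 1 := by
      have : Real.exp (-θ) ≤ Real.exp (-θ * u) := Real.exp_le_exp.mpr (by nlinarith)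
      linarith
    have hxv : Real.exp (-θ) - 1 ≤ Real.exp (-θ * v) - 1 := by
      have : Real.exp (-θ) ≤ Real.exp (-θ * v) := Real.exp_le_exp.mpr (by nlinarith)
      linarith
    have hx0 : Real.exp (-θ * u) - 1 ≤ 0 := by
      have : Real.exp (-θ * u) ≤ 1 := Real.exp_le_one_iff.mpr (by nlinarith)
      linarith
    have hy0 : Real.exp (-θ * v) - 1 ≤ 0 := by
      have : Real.exp (-θ * v) ≤ 1 := Real.exp_le_one_iff.mpr (by nlinarith)
      linarith
    -- xy ≤ D², hence xy / D ≥ D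
    have hxy : (Real.exp (-θ * u) - 1) * (Real.exp (-θ * v) - 1) ≤
        (Real.exp (-θ) - 1) * (Real.exp (-θ) - 1) := by nlinarith
    have hdiv : Real.exp (-θ) - 1 ≤
        (Real.exp (-θ * u) - 1) * (Real.exp (-θ * v) - 1) / (Real.exp (-θ) - 1) := by
      rw [le_div_iff_of_neg hD]; nlinarith
    have hEpos : 0 < Real.exp (-θ) := Real.exp_pos _
    linarith

/-- The Frank Copula is 2-increasing: for `0 ≤ u₁ ≤ u₂ ≤ 1` and `0 ≤ v₁ ≤ v₂ ≤ 1`,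
`C_F(u₂,v₂) - C_F(u₂,v₁) - C_F(u₁,v₂) + C_F(u₁,v₁) ≥ 0`. -/
theorem frank_copula_two_increasing (θ : ℝ) (hθ : θ ≠ 0)
    (C_F : ℝ → ℝ → ℝ)
    (hC : ∀ u v : ℝ, C_F u v =
      -(1 / θ) * Real.log (1 +
        (Real.exp (-θ * u) - 1) * (Real.exp (-θ * v) - 1) / (Real.exp (-θ) - 1))) :
    ∀ u₁ u₂ v₁ v₂ : ℝ, 0 ≤ u₁ → u₁ ≤ u₂ → u₂ ≤ 1 → 0 ≤ v₁ → v₁ ≤ v₂ → v₂ ≤ 1 →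
      0 ≤ C_F u₂ v₂ - C_F u₂ v₁ - C_F u₁ v₂ + C_F u₁ v₁ := by
  intro u₁ u₂ v₁ v₂ hu1 hu12 hu2 hv1 hv12 hv2
  have hu1' : u₁ ≤ 1 := le_trans hu12 hu2
  have hu2' : 0 ≤ u₂ := le_trans hu1 hu12
  have hv1' : v₁ ≤ 1 := le_trans hv12 hv2
  have hv2' : 0 ≤ v₂ := le_trans hv1 hv12
  set D : ℝ := Real.exp (-θ) - 1 with hDdef
  set x₁ : ℝ := Real.exp (-θ * u₁) - 1 with hx1def
  set x₂ : ℝ := Real.exp (-θ * u₂) - 1 with hx2def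
  set y₁ : ℝ := Real.exp (-θ * v₁) - 1 with hy1def
  set y₂ : ℝ := Real.exp (-θ * v₂) - 1 with hy2def
  have hDne : D ≠ 0 := by
    rcases hθ.lt_or_gt with h | h
    · have : (1:ℝ) < Real.exp (-θ) := Real.one_lt_exp_iff.mpr (by linarith)
      simp only [hDdef]; linarith
    · have : Real.exp (-θ) < 1 := Real.exp_lt_one_iff.mpr (by linarith)
      simp only [hDdef]; linarith
  have hA11 : 0 < 1 + x₁ * y₁ / D := frank_inner_pos θ u₁ v₁ hθ hu1 hu1' hv1 hv1'
  have hA12 : 0 < 1 + x₁ * y₂ / D := frank_inner_pos θ u₁ v₂ hθ hu1 hu1' hv2' hv2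
  have hA21 : 0 < 1 + x₂ * y₁ / D := frank_inner_pos θ u₂ v₁ hθ hu2' hu2 hv1 hv1'
  have hA22 : 0 < 1 + x₂ * y₂ / D := frank_inner_pos θ u₂ v₂ hθ hu2' hu2 hv2' hv2
  -- key algebraic identity
  have hkey : (1 + x₂ * y₂ / D) * (1 + x₁ * y₁ / D) - (1 + x₂ * y₁ / D) * (1 + x₁ * y₂ / D)
      = (x₂ - x₁) * (y₂ - y₁) / D := by
    field_simp
    ring
  rw [hC, hC, hC, hC]
  rcases hθ.lt_or_gt with h | h
  · -- θ < 0 : x increasing in u, D > 0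
    have hD : 0 < D := by
      have : (1:ℝ) < Real.exp (-θ) := Real.one_lt_exp_iff.mpr (by linarith)
      simp only [hDdef]; linarith
    have hxm : x₁ ≤ x₂ := by
      have : Real.exp (-θ * u₁) ≤ Real.exp (-θ * u₂) := Real.exp_le_exp.mpr (by
        have := mul_le_mul_of_nonneg_left hu12 (neg_nonneg.mpr h.le); linarith)
      simp only [hx1def, hx2def]; linarith
    have hym : y₁ ≤ y₂ := by
      have : Real.exp (-θ * v₁) ≤ Real.exp (-θ * v₂) := Real.exp_le_exp.mpr (by
        have := mul_le_mul_of_nonneg_left hv12 (neg_nonneg.mpr h.le); linarith)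
      simp only [hy1def, hy2def]; linarith
    have hprod : (1 + x₂ * y₁ / D) * (1 + x₁ * y₂ / D) ≤ (1 + x₂ * y₂ / D) * (1 + x₁ * y₁ / D) := by
      have : 0 ≤ (x₂ - x₁) * (y₂ - y₁) / D :=
        div_nonneg (mul_nonneg (by linarith) (by linarith)) hD.le
      linarith
    have hlog : Real.log ((1 + x₂ * y₁ / D) * (1 + x₁ * y₂ / D)) ≤
        Real.log ((1 + x₂ * y₂ / D) * (1 + x₁ * y₁ / D)) :=
      Real.log_le_log (mul_pos hA21 hA12) hprod
    rw [Real.log_mul hA21.ne' hA12.ne', Real.log_mul hA22.ne' hA11.ne'] at hlog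
    have hθinv : 0 < 1 / θ → False := fun hh => by
      have := (div_pos_iff.mp hh); rcases this with ⟨_, h2⟩ | ⟨h1, _⟩ <;> linarith
    have hθneg : 1 / θ < 0 := by
      rcases lt_trichotomy (1 / θ) 0 with hh | hh | hh
      · exact hh
      · exact absurd hh (by positivity)
      · exact absurd hh (fun _ => hθinv hh)
    have := mul_nonneg (neg_nonneg.mpr hθneg.le) (by linarith : (0:ℝ) ≤
      (Real.log (1 + x₂ * y₂ / D) + Real.log (1 + x₁ * y₁ / D)) -
      (Real.log (1 + x₂ * y₁ / D) + Real.log (1 + x₁ * y₂ / D)))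
    nlinarith [this]
  · -- θ > 0 : x decreasing in u, D < 0
    have hD : D < 0 := by
      have : Real.exp (-θ) < 1 := Real.exp_lt_one_iff.mpr (by linarith)
      simp only [hDdef]; linarith
    have hxm : x₂ ≤ x₁ := by
      have : Real.exp (-θ * u₂) ≤ Real.exp (-θ * u₁) := Real.exp_le_exp.mpr (by
        have := mul_le_mul_of_nonneg_left hu12 h.le; linarith)
      simp only [hx1def, hx2def]; linarith
    have hym : y₂ ≤ y₁ := by
      have : Real.exp (-θ * v₂) ≤ Real.exp (-θ * v₁) := Real.exp_le_exp.mpr (by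
        have := mul_le_mul_of_nonneg_left hv12 h.le; linarith)
      simp only [hy1def, hy2def]; linarith
    have hprod : (1 + x₂ * y₂ / D) * (1 + x₁ * y₁ / D) ≤ (1 + x₂ * y₁ / D) * (1 + x₁ * y₂ / D) := by
      have h1 : (x₂ - x₁) * (y₂ - y₁) / D ≤ 0 :=
        div_nonpos_of_nonneg_of_nonpos (mul_nonneg_of_nonpos_of_nonpos (by linarith : x₂ - x₁ ≤ 0) (by linarith : y₂ - y₁ ≤ 0)) hD.le
      linarith
    have hlog : Real.log ((1 + x₂ * y₂ / D) * (1 + x₁ * y₁ / D)) ≤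
        Real.log ((1 + x₂ * y₁ / D) * (1 + x₁ * y₂ / D)) :=
      Real.log_le_log (mul_pos hA22 hA11) hprod
    rw [Real.log_mul hA21.ne' hA12.ne', Real.log_mul hA22.ne' hA11.ne'] at hlog
    have hθpos : 0 < 1 / θ := by positivity
    have := mul_nonneg hθpos.le (by linarith : (0:ℝ) ≤
      (Real.log (1 + x₂ * y₁ / D) + Real.log (1 + x₁ * y₂ / D)) -
      (Real.log (1 + x₂ * y₂ / D) + Real.log (1 + x₁ * y₁ / D)))
    nlinarith [this]
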